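/- arXiv:2401.16870 — 2 statements merged into one kernel-verified Lean document; each statement's English description precedes it below -/
import Mathlib

section
/- Let Φ : ℝ → ℝ be a strictly increasing continuous function with Φ(0) = 0. If a sequence of operators T_k on ℝ^N satisfies dist(z, Fix(T_k)) ≤ Φ(‖z - T_k z‖) for all k and z, and u_k → u with T_k u_k - u_k → 0, and F_∞ is the closed set equal to the Kuratowski lower limit of Fix(T_k), then u ∈ F_∞. -/
theorem stmt_18 (N : ℕ) (T : ℕ → EuclideanSpace ℝ (Fin N) → EuclideanSpace ℝ (Fin N))
    (Φ : ℝ → ℝ) (hΦmono : StrictMono Φ) (hΦcont : Continuous Φ) (hΦ0 : Φ 0 = 0)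
    (hfix : ∀ k, {z | T k z = z}.Nonempty)
    (herr : ∀ k z, Metric.infDist z {x | T k x = x} ≤ Φ ‖z - T k z‖)
    (Finf : Set (EuclideanSpace ℝ (Fin N)))
    (hFinf : Finf = {p | ∃ q : ℕ → EuclideanSpace ℝ (Fin N),
      (∀ k, T k (q k) = q k) ∧ Filter.Tendsto q Filter.atTop (nhds p)})
    (hFne : Finf.Nonempty)
    (u : EuclideanSpace ℝ (Fin N)) (uk : ℕ → EuclideanSpace ℝ (Fin N))
    (hu : Filter.Tendsto uk Filter.atTop (nhds u))
    (hres : Filter.Tendsto (fun k => T k (uk k) - uk k) Filter.atTop (nhds 0)) :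
    u ∈ Finf := by
  -- choose q k ∈ Fix(T k) with dist (uk k) (q k) < infDist + 1/(k+1)
  have hchoice : ∀ k : ℕ, ∃ y, T k y = y ∧
      dist (uk k) y < Metric.infDist (uk k) {x | T k x = x} + 1 / (k + 1) := by
    intro k
    have hpos : (0 : ℝ) < 1 / (k + 1) := by positivity
    have hlt : Metric.infDist (uk k) {x | T k x = x} <
        Metric.infDist (uk k) {x | T k x = x} + 1 / (k + 1) := by linarith
    obtain ⟨y, hy, hdy⟩ := (Metric.infDist_lt_iff (hfix k)).1 hlt
    exact ⟨y, hy, hdy⟩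
  choose q hq hqd using hchoice
  rw [hFinf]
  refine ⟨q, hq, ?_⟩
  rw [tendsto_iff_dist_tendsto_zero]
  have hbound : ∀ k, dist (q k) u ≤
      (Φ ‖uk k - T k (uk k)‖ + 1 / (k + 1)) + dist (uk k) u := by
    intro k
    have h1 : dist (q k) u ≤ dist (q k) (uk k) + dist (uk k) u := dist_triangle _ _ _
    have h2 : dist (uk k) (q k) ≤ Φ ‖uk k - T k (uk k)‖ + 1 / (k + 1) :=
      le_trans (hqd k).le (by linarith [herr k (uk k)])
    rw [dist_comm (q k) (uk k)] at h1
    linarith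
  have hΦlim : Filter.Tendsto (fun k => Φ ‖uk k - T k (uk k)‖) Filter.atTop (nhds 0) := by
    have hn : Filter.Tendsto (fun k => ‖uk k - T k (uk k)‖) Filter.atTop (nhds 0) := by
      have := hres.neg
      simp only [neg_zero] at this
      have heq : (fun k => ‖uk k - T k (uk k)‖) =
          fun k => ‖-(T k (uk k) - uk k)‖ := by
        funext k; rw [neg_sub]
      rw [heq]
      simpa [Function.comp_def] using (continuous_norm.tendsto (0 : EuclideanSpace ℝ (Fin N))).comp this
    have := (hΦcont.tendsto 0).comp hn
    rwa [hΦ0] at this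
  have hinv : Filter.Tendsto (fun k : ℕ => 1 / ((k : ℝ) + 1)) Filter.atTop (nhds 0) :=
    tendsto_one_div_add_atTop_nhds_zero_nat
  have hdu : Filter.Tendsto (fun k => dist (uk k) u) Filter.atTop (nhds 0) :=
    tendsto_iff_dist_tendsto_zero.1 hu
  have hlim : Filter.Tendsto
      (fun k => (Φ ‖uk k - T k (uk k)‖ + 1 / (k + 1)) + dist (uk k) u)
      Filter.atTop (nhds 0) := by
    simpa using (hΦlim.add hinv).add hdu
  exact squeeze_zero (fun k => dist_nonneg) hbound hlim
end

section
/- For all α ∈ [0,1) and β ∈ [0,1] with β > α, the value λ(α,β) = (√((1-3α)² + 4β(1+β)(1-α)²) - 1 + α - 2α²)/(2(β-α)(1+α+β)) satisfies 0 < λ(α,β) ≤ 1. -/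
theorem stmt_19 (α β : ℝ) (hα0 : 0 ≤ α) (hα1 : α < 1) (hβ1 : β ≤ 1) (hβα : α < β) :
    0 < (Real.sqrt ((1 - 3 * α) ^ 2 + 4 * β * (1 + β) * (1 - α) ^ 2) - 1 + α - 2 * α ^ 2)
        / (2 * (β - α) * (1 + α + β)) ∧
    (Real.sqrt ((1 - 3 * α) ^ 2 + 4 * β * (1 + β) * (1 - α) ^ 2) - 1 + α - 2 * α ^ 2)
        / (2 * (β - α) * (1 + α + β)) ≤ 1 := by
  set D : ℝ := (1 - 3 * α) ^ 2 + 4 * β * (1 + β) * (1 - α) ^ 2 with hDdef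
  have hβ0 : 0 < β := lt_of_le_of_lt hα0 hβα
  have hD0 : 0 ≤ D := by positivity
  have hs : Real.sqrt D ^ 2 = D := Real.sq_sqrt hD0
  have hsn : 0 ≤ Real.sqrt D := Real.sqrt_nonneg D
  have hd : 0 < 2 * (β - α) * (1 + α + β) := by nlinarith
  have hq : (0:ℝ) < 1 - α + 2 * α ^ 2 := by nlinarith
  have hkey : D - (1 - α + 2 * α ^ 2) ^ 2 = 4 * (1 - α) ^ 2 * (β + β ^ 2 - α - α ^ 2) := by
    rw [hDdef]; ring
  have h1α : (0:ℝ) < 1 - α := by linarith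
  have hkpos : 0 < 4 * (1 - α) ^ 2 * (β + β ^ 2 - α - α ^ 2) := by
    apply mul_pos (by positivity)
    nlinarith
  have hnum : 1 - α + 2 * α ^ 2 < Real.sqrt D := by
    nlinarith [mul_self_nonneg (Real.sqrt D - (1 - α + 2 * α ^ 2))]
  have hkey2 : (1 - α + 2 * α ^ 2 + 2 * (β - α) * (1 + α + β)) ^ 2 - D
      = (2 * (β - α) * (1 + α + β)) ^ 2 + 4 * (β - α) * (1 + α + β) * (α + α ^ 2) := by
    rw [hDdef]; ring
  have hk2 : 0 ≤ (2 * (β - α) * (1 + α + β)) ^ 2 + 4 * (β - α) * (1 + α + β) * (α + α ^ 2) := by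
    have : (0:ℝ) ≤ 4 * (β - α) * (1 + α + β) * (α + α ^ 2) := by
      apply mul_nonneg _ (by nlinarith)
      nlinarith
    positivity
  have hqd : (0:ℝ) ≤ 1 - α + 2 * α ^ 2 + 2 * (β - α) * (1 + α + β) := by linarith
  have hupper : Real.sqrt D ≤ 1 - α + 2 * α ^ 2 + 2 * (β - α) * (1 + α + β) := by
    calc Real.sqrt D ≤ Real.sqrt ((1 - α + 2 * α ^ 2 + 2 * (β - α) * (1 + α + β)) ^ 2) :=
          Real.sqrt_le_sqrt (by linarith)
      _ = 1 - α + 2 * α ^ 2 + 2 * (β - α) * (1 + α + β) := Real.sqrt_sq hqd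
  constructor
  · apply div_pos _ hd
    nlinarith
  · rw [div_le_one hd]
    nlinarith
end
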